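/- arXiv:math/0601227 — 2 statements merged into one kernel-verified Lean document; each statement's English description precedes it below -/
import Mathlib

section
/- The Tutte coefficients v_{0,1} and v_{1,0} are topological invariants of graphs: if G is a graph with at least two edges and G' is obtained from G by subdividing one edge e (replacing e by a path of two edges through a new vertex of degree 2), then v_{0,1}(G') = v_{0,1}(G) and v_{1,0}(G') = v_{1,0}(G). -/
open scoped Classical

noncomputable section

structure Multigraph where
  V : Type
  E : Type
  [fintypeV : Fintype V]
  [fintypeE : Fintype E]
  ends : E → Sym2 V

attribute [instance] Multigraph.fintypeV Multigraph.fintypeE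

namespace Multigraph

/-- The simple graph underlying a multigraph (loops and multiplicities dropped);
it has the same connectivity properties as the multigraph. -/
def toSimpleGraph (G : Multigraph) : SimpleGraph G.V where
  Adj v w := v ≠ w ∧ ∃ e : G.E, G.ends e = s(v, w)
  symm := ⟨by
    rintro v w ⟨hne, e, he⟩
    exact ⟨hne.symm, e, by rw [he]; exact Sym2.eq_swap⟩⟩
  loopless := ⟨fun v h => h.1 rfl⟩

/-- `p0 G` is the number of connected components of `G`. -/
def p0 (G : Multigraph) : ℕ := Nat.card G.toSimpleGraph.ConnectedComponent

/-- The number of vertices of `G`. -/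
def numV (G : Multigraph) : ℕ := Fintype.card G.V

/-- The number of edges of `G`. -/
def numE (G : Multigraph) : ℕ := Fintype.card G.E

/-- `p1 G = |E| - |V| + p0 G` is the cyclomatic number of `G`. -/
def p1 (G : Multigraph) : ℕ := G.numE + G.p0 - G.numV

/-- A multigraph is connected if it has exactly one connected component. -/
def Connected (G : Multigraph) : Prop := G.p0 = 1

/-- A loop is an edge whose two endpoints coincide. -/
def IsLoop (G : Multigraph) (e : G.E) : Prop := (G.ends e).IsDiag

/-- The spanning subgraph of `G` with edge set `S`. -/
def spanning (G : Multigraph) (S : Set G.E) : Multigraph where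
  V := G.V
  E := ↥S
  ends := fun e => G.ends e.1

/-- `G` with the edge `e` deleted. -/
def deleteEdge (G : Multigraph) (e : G.E) : Multigraph where
  V := G.V
  E := {f : G.E // f ≠ e}
  ends := fun f => G.ends f.1

/-- An isthmus is an edge whose deletion increases the number of components. -/
def IsIsthmus (G : Multigraph) (e : G.E) : Prop := G.p0 < (G.deleteEdge e).p0

/-- The setoid on vertices identifying the two endpoints of `e`. -/
def contractSetoid (G : Multigraph) (e : G.E) : Setoid G.V :=
  Relation.EqvGen.setoid fun v w => G.ends e = s(v, w)

/-- `G` with the edge `e` contracted: `e` is deleted and its endpoints identified. -/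
def contractEdge (G : Multigraph) (e : G.E) : Multigraph where
  V := Quotient (G.contractSetoid e)
  E := {f : G.E // f ≠ e}
  ends := fun f => (G.ends f.1).map (Quotient.mk (G.contractSetoid e))

/-- The rank `r(S) = |V(G)| - p0(V(G), S)` of a set of edges. -/
def rank (G : Multigraph) (S : Set G.E) : ℕ := G.numV - (G.spanning S).p0

/-- The Tutte polynomial (Whitney rank generating function)
`χ(G; x, y) = ∑_{S ⊆ E} (x-1)^(r(E)-r(S)) (y-1)^(|S|-r(S))`, as an element of
`ℤ[x][y]` (so `x = Polynomial.C Polynomial.X` and `y = Polynomial.X`). -/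
def tutte (G : Multigraph) : Polynomial (Polynomial ℤ) :=
  ∑ S : Finset G.E,
    Polynomial.C (Polynomial.X - 1) ^ (G.rank Set.univ - G.rank ↑S) *
      (Polynomial.X - Polynomial.C 1) ^ (S.card - G.rank ↑S)

/-- `tutteCoeff G i j` is the coefficient `v_{i,j}` of `x^i y^j` in the Tutte polynomial. -/
def tutteCoeff (G : Multigraph) (i j : ℕ) : ℤ := (G.tutte.coeff j).coeff i

/-- Evaluation of the Tutte polynomial at `x`, `y` in a commutative ring. -/
def tutteEval {K : Type} [CommRing K] (G : Multigraph) (x y : K) : K :=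
  Polynomial.eval₂ (Polynomial.eval₂RingHom (Int.castRingHom K) x) y G.tutte

/-- An isomorphism of multigraphs. -/
structure Iso (G H : Multigraph) where
  vEquiv : G.V ≃ H.V
  eEquiv : G.E ≃ H.E
  ends_eq : ∀ e : G.E, H.ends (eEquiv e) = (G.ends e).map vEquiv

/-- The disjoint union of two multigraphs. -/
def disjUnion (G H : Multigraph) : Multigraph where
  V := G.V ⊕ H.V
  E := G.E ⊕ H.E
  ends := fun e =>
    Sum.elim (fun e => (G.ends e).map Sum.inl) (fun e => (H.ends e).map Sum.inr) e

def joinSetoid (G H : Multigraph) (v : G.V) (w : H.V) : Setoid (G.V ⊕ H.V) :=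
  Relation.EqvGen.setoid fun a b => a = Sum.inl v ∧ b = Sum.inr w

/-- The one-vertex join `G * H`, identifying the vertex `v` of `G` with the vertex `w` of `H`. -/
def join (G H : Multigraph) (v : G.V) (w : H.V) : Multigraph where
  V := Quotient (G.joinSetoid H v w)
  E := G.E ⊕ H.E
  ends := fun e =>
    Sum.elim
      (fun e => (G.ends e).map fun a => Quotient.mk (G.joinSetoid H v w) (Sum.inl a))
      (fun e => (H.ends e).map fun a => Quotient.mk (G.joinSetoid H v w) (Sum.inr a)) e

/-- A multigraph consisting of a single loop on a single vertex. -/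
def IsSingleLoop (G : Multigraph) : Prop :=
  Fintype.card G.V = 1 ∧ Fintype.card G.E = 1 ∧ ∀ e : G.E, G.IsLoop e

/-- `G` can be expressed as a one-vertex join `G₁ * G₂` in which each factor has
more than one vertex or is a single loop. -/
def IsJoinDecomposable (G : Multigraph) : Prop :=
  ∃ (G₁ G₂ : Multigraph) (v₁ : G₁.V) (v₂ : G₂.V),
    Nonempty (Iso G (join G₁ G₂ v₁ v₂)) ∧
    (1 < Fintype.card G₁.V ∨ G₁.IsSingleLoop) ∧
    (1 < Fintype.card G₂.V ∨ G₂.IsSingleLoop)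

/-- A multigraph is 2-connected if it is connected and admits no one-vertex join
decomposition (equivalently, it is connected with no cut vertex). -/
def TwoConnected (G : Multigraph) : Prop := G.Connected ∧ ¬G.IsJoinDecomposable

end Multigraph
end

noncomputable section

namespace SubdivAux
open SimpleGraph

variable {α β : Type}

lemma reach_map (A : SimpleGraph α) (B : SimpleGraph β) (φ : α → β)
    (h : ∀ u v, A.Adj u v → B.Reachable (φ u) (φ v)) {u v : α} (huv : A.Reachable u v) :
    B.Reachable (φ u) (φ v) := by
  obtain ⟨w⟩ := huv
  induction w with
  | nil => exact Reachable.refl _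
  | cons h' _ ih => exact (h _ _ h').trans ih

def compLift (A : SimpleGraph α) (B : SimpleGraph β) (φ : α → β)
    (h : ∀ u v, A.Adj u v → B.Reachable (φ u) (φ v)) :
    A.ConnectedComponent → B.ConnectedComponent :=
  Quot.lift (fun v => B.connectedComponentMk (φ v))
    (fun _ _ huv => ConnectedComponent.sound (reach_map A B φ h huv))

noncomputable def compEquiv (A : SimpleGraph α) (B : SimpleGraph β) (φ : α → β) (ψ : β → α)
    (h1 : ∀ u v, A.Adj u v → B.Reachable (φ u) (φ v))
    (h2 : ∀ u v, B.Adj u v → A.Reachable (ψ u) (ψ v))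
    (h3 : ∀ u, A.Reachable (ψ (φ u)) u)
    (h4 : ∀ v, B.Reachable (φ (ψ v)) v) :
    A.ConnectedComponent ≃ B.ConnectedComponent where
  toFun := compLift A B φ h1
  invFun := compLift B A ψ h2
  left_inv := ConnectedComponent.ind fun v => ConnectedComponent.sound (h3 v)
  right_inv := ConnectedComponent.ind fun v => ConnectedComponent.sound (h4 v)

noncomputable def compEquivOption (A : SimpleGraph α) (B : SimpleGraph (Option α))
    (hnone : ∀ x, ¬ B.Adj none x)
    (hBA : ∀ u v, B.Adj (some u) (some v) → A.Adj u v)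
    (hAB : ∀ u v, A.Adj u v → B.Adj (some u) (some v)) :
    B.ConnectedComponent ≃ Option A.ConnectedComponent where
  toFun := Quot.lift (fun x => x.map A.connectedComponentMk) (by
    have step : ∀ x y : Option α, B.Adj x y →
        Option.map A.connectedComponentMk x = Option.map A.connectedComponentMk y := by
      rintro (_ | u) (_ | v) h
      · rfl
      · exact absurd h (hnone _)
      · exact absurd h.symm (hnone _)
      · exact congrArg some (ConnectedComponent.sound (hBA u v h).reachable)
    intro x y hxy
    obtain ⟨w⟩ := hxy
    induction w with
    | nil => rfl
    | cons h' _ ih => exact (step _ _ h').trans ih)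
  invFun := fun o => match o with
    | none => B.connectedComponentMk none
    | some c => compLift A B some (fun u v h => (hAB u v h).reachable) c
  left_inv := by
    refine ConnectedComponent.ind fun x => ?_
    cases x with
    | none => rfl
    | some v => rfl
  right_inv := by
    rintro (_ | c)
    · rfl
    · exact ConnectedComponent.ind (fun v => rfl) c

instance (A : SimpleGraph α) [Finite α] : Finite A.ConnectedComponent :=
  Finite.of_surjective A.connectedComponentMk (fun c => c.exists_rep)

lemma card_comps_le_of_le {A B : SimpleGraph α} [Finite α]
    (h : ∀ u v, A.Adj u v → B.Adj u v) :
    Nat.card B.ConnectedComponent ≤ Nat.card A.ConnectedComponent := by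
  have hsurj : Function.Surjective (compLift A B id (fun u v hu => (h u v hu).reachable)) :=
    ConnectedComponent.ind fun v => ⟨A.connectedComponentMk v, rfl⟩
  exact Nat.card_le_card_of_surjective _ hsurj

lemma card_comps_le_add_one {A B : SimpleGraph α} [Finite α] (x y : α)
    (hsub : ∀ u v, A.Adj u v → B.Adj u v)
    (hsup : ∀ u v, B.Adj u v → A.Adj u v ∨ (u = x ∧ v = y) ∨ (u = y ∧ v = x)) :
    Nat.card A.ConnectedComponent ≤ Nat.card B.ConnectedComponent + 1 := by
  classical
  have key : ∀ u v : α, B.Reachable u v → A.Reachable u v ∨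
      ((A.Reachable u x ∨ A.Reachable u y) ∧ (A.Reachable v x ∨ A.Reachable v y)) := by
    intro u v huv
    obtain ⟨w⟩ := huv
    induction w with
    | nil => exact Or.inl (Reachable.refl _)
    | @cons u w v h' p ih =>
        rcases hsup _ _ h' with hA | ⟨rfl, rfl⟩ | ⟨rfl, rfl⟩
        · rcases ih with h | ⟨hw, hv⟩
          · exact Or.inl (hA.reachable.trans h)
          · refine Or.inr ⟨?_, hv⟩
            rcases hw with h | h
            · exact Or.inl (hA.reachable.trans h)
            · exact Or.inr (hA.reachable.trans h)
        · refine Or.inr ⟨Or.inl (Reachable.refl _), ?_⟩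
          rcases ih with h | ⟨_, hv⟩
          · exact Or.inr h.symm
          · exact hv
        · refine Or.inr ⟨Or.inr (Reachable.refl _), ?_⟩
          rcases ih with h | ⟨_, hv⟩
          · exact Or.inl h.symm
          · exact hv
  set π := compLift A B id (fun u v hu => (hsub u v hu).reachable) with hπ
  have hinj : Function.Injective (fun c : A.ConnectedComponent =>
      if c = A.connectedComponentMk x then (none : Option B.ConnectedComponent)
      else some (π c)) := by
    refine ConnectedComponent.ind₂ fun u v => ?_
    intro huv
    dsimp only at huv
    by_cases hu : A.connectedComponentMk u = A.connectedComponentMk x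
    · by_cases hv : A.connectedComponentMk v = A.connectedComponentMk x
      · exact hu.trans hv.symm
      · rw [if_pos hu, if_neg hv] at huv; exact absurd huv (by simp)
    · by_cases hv : A.connectedComponentMk v = A.connectedComponentMk x
      · rw [if_neg hu, if_pos hv] at huv; exact absurd huv (by simp)
      · rw [if_neg hu, if_neg hv] at huv
        have hBuv : B.connectedComponentMk u = B.connectedComponentMk v :=
          Option.some.inj huv
        rcases key u v (ConnectedComponent.exact hBuv) with h | ⟨h1, h2⟩
        · exact ConnectedComponent.sound h
        · have hu' : A.Reachable u y := by
            rcases h1 with h | h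
            · exact absurd (ConnectedComponent.sound h) hu
            · exact h
          have hv' : A.Reachable v y := by
            rcases h2 with h | h
            · exact absurd (ConnectedComponent.sound h) hv
            · exact h
          exact ConnectedComponent.sound (hu'.trans hv'.symm)
  haveI : Finite B.ConnectedComponent := Finite.of_surjective B.connectedComponentMk (fun c => c.exists_rep)
  haveI := Fintype.ofFinite B.ConnectedComponent
  calc Nat.card A.ConnectedComponent ≤ Nat.card (Option B.ConnectedComponent) :=
        Nat.card_le_card_of_injective _ hinj
    _ = Nat.card B.ConnectedComponent + 1 := Finite.card_option

end SubdivAux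
end


namespace Multigraph
open SubdivAux SimpleGraph

attribute [reducible] spanning

lemma spanning_adj (G : Multigraph) (S : Set G.E) (v w : G.V) :
    (G.spanning S).toSimpleGraph.Adj v w ↔ v ≠ w ∧ ∃ f ∈ S, G.ends f = s(v, w) := by
  constructor
  · rintro ⟨hne, ⟨f, hf⟩, hf2⟩
    exact ⟨hne, f, hf, hf2⟩
  · rintro ⟨hne, f, hf, hf2⟩
    exact ⟨hne, ⟨f, hf⟩, hf2⟩

lemma p0_le_numV (G : Multigraph) : G.p0 ≤ G.numV := by
  have h := Nat.card_le_card_of_surjective G.toSimpleGraph.connectedComponentMk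
    (fun c => c.exists_rep)
  simpa [p0, numV, Nat.card_eq_fintype_card] using h

lemma p0_spanning_mono (G : Multigraph) {S T : Set G.E} (h : S ⊆ T) :
    (G.spanning T).p0 ≤ (G.spanning S).p0 := by
  refine card_comps_le_of_le (A := (G.spanning S).toSimpleGraph)
    (B := (G.spanning T).toSimpleGraph) ?_
  intro u v hadj
  rw [spanning_adj] at hadj ⊢
  obtain ⟨hne, f, hf, he⟩ := hadj
  exact ⟨hne, f, h hf, he⟩

lemma rank_le_rank_univ (G : Multigraph) (S : Set G.E) : G.rank S ≤ G.rank Set.univ :=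
  Nat.sub_le_sub_left (G.p0_spanning_mono (Set.subset_univ S)) _

lemma numV_le_p0_add_card (G : Multigraph) (S : Finset G.E) :
    G.numV ≤ (G.spanning ↑S).p0 + S.card := by
  classical
  induction S using Finset.induction_on with
  | empty =>
      have hinj : Function.Injective
          ((G.spanning ↑(∅ : Finset G.E)).toSimpleGraph.connectedComponentMk) := by
        intro u v huv
        obtain ⟨w⟩ := SimpleGraph.ConnectedComponent.exact huv
        cases w with
        | nil => rfl
        | cons h' _ =>
            obtain ⟨-, ⟨f, hf⟩, -⟩ := h'
            simp at hf
      have h2 := Nat.card_le_card_of_injective _ hinj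
      simpa [p0, numV, Nat.card_eq_fintype_card] using h2
  | @insert f S hfS ih =>
      obtain ⟨x, y, hxy⟩ : ∃ x y, G.ends f = s(x, y) := by
        induction G.ends f using Sym2.ind with
        | _ x y => exact ⟨x, y, rfl⟩
      have step : (G.spanning ↑S).p0 ≤ (G.spanning ↑(insert f S)).p0 + 1 := by
        refine card_comps_le_add_one (A := (G.spanning ↑S).toSimpleGraph)
          (B := (G.spanning ↑(insert f S)).toSimpleGraph) x y ?_ ?_
        · intro u v h
          rw [spanning_adj] at h ⊢
          obtain ⟨hne, g, hg, hge⟩ := h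
          exact ⟨hne, g, by simp [hg], hge⟩
        · intro u v h
          rw [spanning_adj] at h
          obtain ⟨hne, g, hg, hge⟩ := h
          have hg' : g = f ∨ g ∈ S := by simpa using hg
          rcases hg' with rfl | hgS
          · right
            have h3 := hxy.symm.trans hge
            rw [Sym2.eq_iff] at h3
            tauto
          · exact Or.inl ((G.spanning_adj ↑S u v).2 ⟨hne, g, hgS, hge⟩)
      have hcard : (insert f S).card = S.card + 1 := Finset.card_insert_of_notMem hfS
      omega

lemma rank_coe_le_card (G : Multigraph) (S : Finset G.E) : G.rank ↑S ≤ S.card := by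
  have h := G.numV_le_p0_add_card S
  unfold rank
  omega

end Multigraph

namespace Multigraph

/-- The graph obtained from `G` by subdividing the edge `e` (with endpoints `a`
and `b`): `e` is replaced by a path of two edges through one new vertex. -/
noncomputable def subdivide (G : Multigraph) (e : G.E) (a b : G.V) : Multigraph where
  V := Option G.V
  E := {f : G.E // f ≠ e} ⊕ Bool
  ends := fun f =>
    Sum.elim (fun f => (G.ends f.1).map some)
      (fun c =>
        if c then s((none : Option G.V), some a) else s((none : Option G.V), some b)) f

attribute [reducible] subdivide

open SubdivAux SimpleGraph

section LiftE
variable (G : Multigraph) (e : G.E)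

def liftE (A : Finset {f : G.E // f ≠ e}) : Finset G.E :=
  A.map ⟨Subtype.val, Subtype.val_injective⟩

lemma mem_liftE {A : Finset {f : G.E // f ≠ e}} {f : G.E} :
    f ∈ liftE G e A ↔ ∃ hf : f ≠ e, ⟨f, hf⟩ ∈ A := by
  simp only [liftE, Finset.mem_map, Function.Embedding.coeFn_mk]
  constructor
  · rintro ⟨⟨g, hg⟩, hgA, rfl⟩
    exact ⟨hg, hgA⟩
  · rintro ⟨hf, hA⟩
    exact ⟨⟨f, hf⟩, hA, rfl⟩

lemma card_liftE (A : Finset {f : G.E // f ≠ e}) : (liftE G e A).card = A.card :=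
  Finset.card_map _

lemma not_mem_liftE (A : Finset {f : G.E // f ≠ e}) : e ∉ liftE G e A := by
  rw [mem_liftE]
  rintro ⟨hf, -⟩
  exact hf rfl

end LiftE

section Sub
variable (G : Multigraph) (e : G.E) (a b : G.V)

lemma subdivide_spanning_adj (S : Set ((G.subdivide e a b).E)) (v w : Option G.V) :
    ((G.subdivide e a b).spanning S).toSimpleGraph.Adj v w ↔ v ≠ w ∧
      ((∃ g : {f : G.E // f ≠ e}, Sum.inl g ∈ S ∧ (G.ends g.1).map some = s(v, w)) ∨
       (Sum.inr true ∈ S ∧ s((none : Option G.V), some a) = s(v, w)) ∨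
       (Sum.inr false ∈ S ∧ s((none : Option G.V), some b) = s(v, w))) := by
  rw [spanning_adj]
  refine and_congr_right fun _ => ?_
  constructor
  · rintro ⟨(g | c), hg, hge⟩
    · exact Or.inl ⟨g, hg, hge⟩
    · cases c
      · exact Or.inr (Or.inr ⟨hg, hge⟩)
      · exact Or.inr (Or.inl ⟨hg, hge⟩)
  · rintro (⟨g, hg, hge⟩ | ⟨hg, hge⟩ | ⟨hg, hge⟩)
    · exact ⟨Sum.inl g, hg, hge⟩
    · exact ⟨Sum.inr true, hg, hge⟩
    · exact ⟨Sum.inr false, hg, hge⟩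

lemma ends_exists (f : G.E) : ∃ x y, G.ends f = s(x, y) := by
  induction G.ends f using Sym2.ind with
  | _ x y => exact ⟨x, y, rfl⟩

lemma p0_sub_empty (A : Finset {f : G.E // f ≠ e}) :
    ((G.subdivide e a b).spanning (↑(A.disjSum (∅ : Finset Bool)) : Set ({f : G.E // f ≠ e} ⊕ Bool))).p0 =
      (G.spanning ↑(liftE G e A)).p0 + 1 := by
  classical
  have E1 := compEquivOption (G.spanning ↑(liftE G e A)).toSimpleGraph
      ((G.subdivide e a b).spanning (↑(A.disjSum (∅ : Finset Bool)) : Set ({f : G.E // f ≠ e} ⊕ Bool))).toSimpleGraph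
      ?_ ?_ ?_
  · haveI : Finite (G.spanning ↑(liftE G e A)).toSimpleGraph.ConnectedComponent :=
      Finite.of_surjective _ (fun c => c.exists_rep)
    calc ((G.subdivide e a b).spanning (↑(A.disjSum (∅ : Finset Bool)) : Set ({f : G.E // f ≠ e} ⊕ Bool))).p0
        = Nat.card (Option (G.spanning ↑(liftE G e A)).toSimpleGraph.ConnectedComponent) :=
          Nat.card_congr E1
      _ = (G.spanning ↑(liftE G e A)).p0 + 1 := Finite.card_option
  · intro x hadj
    rw [subdivide_spanning_adj] at hadj
    obtain ⟨-, hcase⟩ := hadj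
    rcases hcase with ⟨g, hg, hge⟩ | ⟨hg, -⟩ | ⟨hg, -⟩
    · obtain ⟨p, q, hpq⟩ := G.ends_exists g.1
      rw [hpq, Sym2.map_pair_eq, Sym2.eq_iff] at hge
      rcases hge with ⟨h1, -⟩ | ⟨-, h1⟩ <;> exact Option.some_ne_none _ h1
    · simp [Finset.mem_coe, Finset.inr_mem_disjSum] at hg
    · simp [Finset.mem_coe, Finset.inr_mem_disjSum] at hg
  · intro u v hadj
    rw [subdivide_spanning_adj] at hadj
    obtain ⟨hne, hcase⟩ := hadj
    rcases hcase with ⟨⟨g, hgne⟩, hg, hge⟩ | ⟨hg, -⟩ | ⟨hg, -⟩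
    · obtain ⟨p, q, hpq⟩ := G.ends_exists g
      rw [hpq, Sym2.map_pair_eq, Sym2.eq_iff] at hge
      rw [spanning_adj]
      refine ⟨fun h => hne (congrArg some h), g, ?_, ?_⟩
      · rw [Finset.mem_coe, mem_liftE]
        exact ⟨hgne, by simpa [Finset.inl_mem_disjSum] using hg⟩
      · rcases hge with ⟨h1, h2⟩ | ⟨h1, h2⟩
        · rw [hpq, Option.some.inj h1, Option.some.inj h2]
        · rw [hpq, Option.some.inj h1, Option.some.inj h2, Sym2.eq_swap]
    · simp [Finset.mem_coe, Finset.inr_mem_disjSum] at hg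
    · simp [Finset.mem_coe, Finset.inr_mem_disjSum] at hg
  · intro u v hadj
    rw [spanning_adj] at hadj
    obtain ⟨hne, f, hf, hfe⟩ := hadj
    rw [Finset.mem_coe, mem_liftE] at hf
    obtain ⟨hfn, hfA⟩ := hf
    rw [subdivide_spanning_adj]
    refine ⟨fun h => hne (Option.some.inj h), Or.inl ⟨⟨f, hfn⟩, by simpa [Finset.inl_mem_disjSum] using hfA, ?_⟩⟩
    rw [hfe, Sym2.map_pair_eq]

end Sub



section Sub2
variable (G : Multigraph) (e : G.E) (a b : G.V)

lemma p0_sub_single (c : Bool) (A : Finset {f : G.E // f ≠ e}) :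
    ((G.subdivide e a b).spanning
        (↑(A.disjSum ({c} : Finset Bool)) : Set ({f : G.E // f ≠ e} ⊕ Bool))).p0 =
      (G.spanning ↑(liftE G e A)).p0 := by
  classical
  have E1 := compEquiv (G.spanning ↑(liftE G e A)).toSimpleGraph
      ((G.subdivide e a b).spanning
        (↑(A.disjSum ({c} : Finset Bool)) : Set ({f : G.E // f ≠ e} ⊕ Bool))).toSimpleGraph
      some (fun o => o.getD (if c = true then a else b)) ?_ ?_ ?_ ?_
  · exact (Nat.card_congr E1).symm
  · intro u v hadj
    rw [spanning_adj] at hadj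
    obtain ⟨hne, f, hf, hfe⟩ := hadj
    rw [Finset.mem_coe, mem_liftE] at hf
    obtain ⟨hfn, hfA⟩ := hf
    apply SimpleGraph.Adj.reachable
    rw [subdivide_spanning_adj]
    exact ⟨fun h => hne (Option.some.inj h),
      Or.inl ⟨⟨f, hfn⟩, by simpa [Finset.inl_mem_disjSum] using hfA,
        by rw [hfe, Sym2.map_pair_eq]⟩⟩
  · intro u v hadj
    rw [subdivide_spanning_adj] at hadj
    obtain ⟨hne, hcase⟩ := hadj
    rcases hcase with ⟨⟨g, hgne⟩, hg, hge⟩ | ⟨hg, hge⟩ | ⟨hg, hge⟩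
    · obtain ⟨p, q, hpq⟩ := G.ends_exists g
      have hmem : g ∈ (↑(liftE G e A) : Set G.E) := by
        rw [Finset.mem_coe, mem_liftE]
        exact ⟨hgne, by simpa [Finset.inl_mem_disjSum] using hg⟩
      rw [hpq, Sym2.map_pair_eq, Sym2.eq_iff] at hge
      rcases hge with ⟨h1, h2⟩ | ⟨h1, h2⟩
      · subst h1; subst h2
        exact ((G.spanning_adj _ _ _).2
          ⟨fun h => hne (congrArg some h), g, hmem, hpq⟩).reachable
      · subst h1; subst h2
        exact ((G.spanning_adj _ _ _).2
          ⟨fun h => hne (congrArg some h), g, hmem, hpq.trans Sym2.eq_swap⟩).reachable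
    · have hc : c = true := by
        have := hg
        simp only [Finset.mem_coe, Finset.inr_mem_disjSum, Finset.mem_singleton] at this
        exact this.symm
      subst hc
      rw [Sym2.eq_iff] at hge
      rcases hge with ⟨h1, h2⟩ | ⟨h1, h2⟩
      · subst h1; subst h2
        exact SimpleGraph.Reachable.refl a
      · subst h1; subst h2
        exact SimpleGraph.Reachable.refl a
    · have hc : c = false := by
        have := hg
        simp only [Finset.mem_coe, Finset.inr_mem_disjSum, Finset.mem_singleton] at this
        exact this.symm
      subst hc
      rw [Sym2.eq_iff] at hge
      rcases hge with ⟨h1, h2⟩ | ⟨h1, h2⟩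
      · subst h1; subst h2
        exact SimpleGraph.Reachable.refl b
      · subst h1; subst h2
        exact SimpleGraph.Reachable.refl b
  · intro u
    exact SimpleGraph.Reachable.refl u
  · intro v
    cases v with
    | some u => exact SimpleGraph.Reachable.refl (some u)
    | none =>
        cases c with
        | true =>
            refine SimpleGraph.Adj.reachable ?_
            rw [subdivide_spanning_adj]
            exact ⟨by simp, Or.inr (Or.inl
              ⟨by simp [Finset.mem_coe, Finset.inr_mem_disjSum], Sym2.eq_swap⟩)⟩
        | false =>
            refine SimpleGraph.Adj.reachable ?_
            rw [subdivide_spanning_adj]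
            exact ⟨by simp, Or.inr (Or.inr
              ⟨by simp [Finset.mem_coe, Finset.inr_mem_disjSum], Sym2.eq_swap⟩)⟩

lemma p0_sub_both (hab : G.ends e = s(a, b)) (A : Finset {f : G.E // f ≠ e}) :
    ((G.subdivide e a b).spanning
        (↑(A.disjSum (Finset.univ : Finset Bool)) : Set ({f : G.E // f ≠ e} ⊕ Bool))).p0 =
      (G.spanning ↑(insert e (liftE G e A))).p0 := by
  classical
  have adjT : ((G.subdivide e a b).spanning
      (↑(A.disjSum (Finset.univ : Finset Bool)) : Set ({f : G.E // f ≠ e} ⊕ Bool))).toSimpleGraph.Adj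
      (some a) none := by
    rw [subdivide_spanning_adj]
    exact ⟨by simp, Or.inr (Or.inl
      ⟨by simp [Finset.mem_coe, Finset.inr_mem_disjSum], Sym2.eq_swap⟩)⟩
  have adjF : ((G.subdivide e a b).spanning
      (↑(A.disjSum (Finset.univ : Finset Bool)) : Set ({f : G.E // f ≠ e} ⊕ Bool))).toSimpleGraph.Adj
      none (some b) := by
    rw [subdivide_spanning_adj]
    exact ⟨by simp, Or.inr (Or.inr
      ⟨by simp [Finset.mem_coe, Finset.inr_mem_disjSum], rfl⟩)⟩
  have E1 := compEquiv (G.spanning ↑(insert e (liftE G e A))).toSimpleGraph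
      ((G.subdivide e a b).spanning
        (↑(A.disjSum (Finset.univ : Finset Bool)) : Set ({f : G.E // f ≠ e} ⊕ Bool))).toSimpleGraph
      some (fun o => o.getD a) ?_ ?_ ?_ ?_
  · exact (Nat.card_congr E1).symm
  · intro u v hadj
    rw [spanning_adj] at hadj
    obtain ⟨hne, f, hf, hfe⟩ := hadj
    have hf' : f = e ∨ f ∈ liftE G e A := by simpa using hf
    rcases hf' with rfl | hfA
    · have h2 : s(a, b) = s(u, v) := hab.symm.trans hfe
      rw [Sym2.eq_iff] at h2
      rcases h2 with ⟨rfl, rfl⟩ | ⟨rfl, rfl⟩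
      · exact adjT.reachable.trans adjF.reachable
      · exact adjF.symm.reachable.trans adjT.symm.reachable
    · obtain ⟨hfn, hfA'⟩ := (mem_liftE G e).mp hfA
      refine SimpleGraph.Adj.reachable ?_
      rw [subdivide_spanning_adj]
      exact ⟨fun h => hne (Option.some.inj h),
        Or.inl ⟨⟨f, hfn⟩, by simpa [Finset.inl_mem_disjSum] using hfA',
          by rw [hfe, Sym2.map_pair_eq]⟩⟩
  · intro u v hadj
    rw [subdivide_spanning_adj] at hadj
    obtain ⟨hne, hcase⟩ := hadj
    rcases hcase with ⟨⟨g, hgne⟩, hg, hge⟩ | ⟨hg, hge⟩ | ⟨hg, hge⟩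
    · obtain ⟨p, q, hpq⟩ := G.ends_exists g
      have hmem : g ∈ (↑(insert e (liftE G e A)) : Set G.E) := by
        rw [Finset.mem_coe, Finset.mem_insert]
        exact Or.inr ((mem_liftE G e).mpr
          ⟨hgne, by simpa [Finset.inl_mem_disjSum] using hg⟩)
      rw [hpq, Sym2.map_pair_eq, Sym2.eq_iff] at hge
      rcases hge with ⟨h1, h2⟩ | ⟨h1, h2⟩
      · subst h1; subst h2
        exact ((G.spanning_adj _ _ _).2
          ⟨fun h => hne (congrArg some h), g, hmem, hpq⟩).reachable
      · subst h1; subst h2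
        exact ((G.spanning_adj _ _ _).2
          ⟨fun h => hne (congrArg some h), g, hmem, hpq.trans Sym2.eq_swap⟩).reachable
    · rw [Sym2.eq_iff] at hge
      rcases hge with ⟨h1, h2⟩ | ⟨h1, h2⟩
      · subst h1; subst h2
        exact SimpleGraph.Reachable.refl a
      · subst h1; subst h2
        exact SimpleGraph.Reachable.refl a
    · rw [Sym2.eq_iff] at hge
      by_cases hb : a = b
      · subst hb
        rcases hge with ⟨h1, h2⟩ | ⟨h1, h2⟩
        · subst h1; subst h2
          exact SimpleGraph.Reachable.refl a
        · subst h1; subst h2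
          exact SimpleGraph.Reachable.refl a
      · have hreach : (G.spanning ↑(insert e (liftE G e A))).toSimpleGraph.Reachable a b := by
          refine SimpleGraph.Adj.reachable ?_
          rw [spanning_adj]
          exact ⟨hb, e, by simp, hab⟩
        rcases hge with ⟨h1, h2⟩ | ⟨h1, h2⟩
        · subst h1; subst h2
          exact hreach
        · subst h1; subst h2
          exact hreach.symm
  · intro u
    exact SimpleGraph.Reachable.refl u
  · intro v
    cases v with
    | some u => exact SimpleGraph.Reachable.refl (some u)
    | none => exact adjT.reachable

lemma numV_subdivide : (G.subdivide e a b).numV = G.numV + 1 := by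
  have h1 : (G.subdivide e a b).numV = Nat.card (Option G.V) := Nat.card_eq_fintype_card.symm
  have h2 : G.numV = Nat.card G.V := Nat.card_eq_fintype_card.symm
  rw [h1, h2, Finite.card_option]

lemma rank_sub_empty (A : Finset {f : G.E // f ≠ e}) :
    (G.subdivide e a b).rank
        (↑(A.disjSum (∅ : Finset Bool)) : Set ({f : G.E // f ≠ e} ⊕ Bool)) =
      G.rank ↑(liftE G e A) := by
  unfold rank
  rw [numV_subdivide, p0_sub_empty]
  omega

lemma rank_sub_single (c : Bool) (A : Finset {f : G.E // f ≠ e}) :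
    (G.subdivide e a b).rank
        (↑(A.disjSum ({c} : Finset Bool)) : Set ({f : G.E // f ≠ e} ⊕ Bool)) =
      G.rank ↑(liftE G e A) + 1 := by
  have hp : (G.spanning ↑(liftE G e A)).p0 ≤ G.numV := p0_le_numV _
  unfold rank
  rw [numV_subdivide, p0_sub_single]
  unfold numV at hp ⊢
  omega

lemma rank_sub_both (hab : G.ends e = s(a, b)) (A : Finset {f : G.E // f ≠ e}) :
    (G.subdivide e a b).rank
        (↑(A.disjSum (Finset.univ : Finset Bool)) : Set ({f : G.E // f ≠ e} ⊕ Bool)) =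
      G.rank ↑(insert e (liftE G e A)) + 1 := by
  have hp : (G.spanning ↑(insert e (liftE G e A))).p0 ≤ G.numV := p0_le_numV _
  unfold rank
  rw [numV_subdivide, p0_sub_both G e a b hab]
  unfold numV at hp ⊢
  omega

lemma insert_liftE_univ : insert e (liftE G e Finset.univ) = (Finset.univ : Finset G.E) := by
  ext f
  simp only [Finset.mem_insert, mem_liftE, Finset.mem_univ, iff_true]
  by_cases hf : f = e
  · exact Or.inl hf
  · exact Or.inr ⟨hf, trivial⟩

lemma rank_sub_univ (hab : G.ends e = s(a, b)) :
    (G.subdivide e a b).rank Set.univ = G.rank Set.univ + 1 := by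
  have h1 : (Set.univ : Set ({f : G.E // f ≠ e} ⊕ Bool)) =
      (↑((Finset.univ : Finset {f : G.E // f ≠ e}).disjSum (Finset.univ : Finset Bool)) :
        Set ({f : G.E // f ≠ e} ⊕ Bool)) := by
    rw [Finset.univ_disjSum_univ, Finset.coe_univ]
  rw [show (Set.univ : Set ((G.subdivide e a b).E)) =
      (↑((Finset.univ : Finset {f : G.E // f ≠ e}).disjSum (Finset.univ : Finset Bool)) :
        Set ({f : G.E // f ≠ e} ⊕ Bool)) from h1]
  rw [rank_sub_both G e a b hab, insert_liftE_univ, Finset.coe_univ]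

end Sub2


section Final
open Polynomial

noncomputable def tutteTerm (G : Multigraph) (S : Finset G.E) : Polynomial (Polynomial ℤ) :=
  Polynomial.C (Polynomial.X - 1) ^ (G.rank Set.univ - G.rank ↑S) *
    (Polynomial.X - Polynomial.C 1) ^ (S.card - G.rank ↑S)

noncomputable def subTerm (G : Multigraph) (e : G.E) (a b : G.V) (A : Finset {f : G.E // f ≠ e})
    (B : Finset Bool) : Polynomial (Polynomial ℤ) :=
  Polynomial.C (Polynomial.X - 1) ^ ((G.subdivide e a b).rank Set.univ -
      (G.subdivide e a b).rank (↑(A.disjSum B) : Set ({f : G.E // f ≠ e} ⊕ Bool))) *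
    (Polynomial.X - Polynomial.C 1) ^ ((A.disjSum B).card -
      (G.subdivide e a b).rank (↑(A.disjSum B) : Set ({f : G.E // f ≠ e} ⊕ Bool)))

def finsetSumEquiv {α β : Type*} : Finset (α ⊕ β) ≃ Finset α × Finset β where
  toFun S := (S.toLeft, S.toRight)
  invFun p := p.1.disjSum p.2
  left_inv S := Finset.toLeft_disjSum_toRight
  right_inv p := by
    cases p with
    | mk A B => simp [Finset.toLeft_disjSum, Finset.toRight_disjSum]

lemma tutte_eq_sum_tutteTerm (G : Multigraph) : G.tutte = ∑ S : Finset G.E, tutteTerm G S := rfl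

lemma liftE_subtype (G : Multigraph) (e : G.E) {T : Finset G.E} (h : e ∉ T) :
    liftE G e (T.subtype (· ≠ e)) = T := by
  classical
  ext f
  rw [mem_liftE]
  constructor
  · rintro ⟨hf, hmem⟩
    simpa using Finset.mem_subtype.mp hmem
  · intro hf
    have hfe : f ≠ e := fun hh => h (hh ▸ hf)
    exact ⟨hfe, Finset.mem_subtype.mpr hf⟩

lemma insert_liftE_subtype (G : Multigraph) (e : G.E) {T : Finset G.E} (h : e ∈ T) :
    insert e (liftE G e (T.subtype (· ≠ e))) = T := by
  classical
  ext f
  simp only [Finset.mem_insert, mem_liftE]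
  constructor
  · rintro (rfl | ⟨hf, hmem⟩)
    · exact h
    · simpa using Finset.mem_subtype.mp hmem
  · intro hf
    by_cases hfe : f = e
    · exact Or.inl hfe
    · exact Or.inr ⟨hfe, Finset.mem_subtype.mpr hf⟩

lemma subtype_liftE (G : Multigraph) (e : G.E) (A : Finset {f : G.E // f ≠ e}) :
    (liftE G e A).subtype (· ≠ e) = A := by
  classical
  ext g
  rw [Finset.mem_subtype, mem_liftE]
  constructor
  · rintro ⟨h, hmem⟩
    cases g
    exact hmem
  · intro hg
    exact ⟨g.2, by cases g; exact hg⟩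

lemma subtype_insert_liftE (G : Multigraph) (e : G.E) (A : Finset {f : G.E // f ≠ e}) :
    (insert e (liftE G e A)).subtype (· ≠ e) = A := by
  classical
  ext g
  rw [Finset.mem_subtype, Finset.mem_insert, mem_liftE]
  constructor
  · rintro (h | ⟨hf, hmem⟩)
    · exact absurd h g.2
    · cases g
      exact hmem
  · intro hg
    exact Or.inr ⟨g.2, by cases g; exact hg⟩

lemma tutte_split (G : Multigraph) (e : G.E) :
    G.tutte = (∑ A : Finset {f : G.E // f ≠ e}, tutteTerm G (liftE G e A)) +
      ∑ A : Finset {f : G.E // f ≠ e}, tutteTerm G (insert e (liftE G e A)) := by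
  classical
  rw [tutte_eq_sum_tutteTerm,
    ← Finset.sum_filter_add_sum_filter_not Finset.univ (fun T => e ∉ T) (tutteTerm G)]
  congr 1
  · refine Finset.sum_nbij' (i := fun T : Finset G.E => T.subtype (· ≠ e))
      (j := fun A => liftE G e A) ?_ ?_ ?_ ?_ ?_
    · intro T _
      exact Finset.mem_univ _
    · intro A _
      simp only [Finset.mem_filter, Finset.mem_univ, true_and]
      exact not_mem_liftE G e A
    · intro T hT
      simp only [Finset.mem_filter, Finset.mem_univ, true_and] at hT
      exact liftE_subtype G e hT
    · intro A _
      exact subtype_liftE G e A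
    · intro T hT
      simp only [Finset.mem_filter, Finset.mem_univ, true_and] at hT
      rw [liftE_subtype G e hT]
  · refine Finset.sum_nbij' (i := fun T : Finset G.E => T.subtype (· ≠ e))
      (j := fun A => insert e (liftE G e A)) ?_ ?_ ?_ ?_ ?_
    · intro T _
      exact Finset.mem_univ _
    · intro A _
      simp only [Finset.mem_filter, Finset.mem_univ, true_and, not_not]
      exact Finset.mem_insert_self e _
    · intro T hT
      simp only [Finset.mem_filter, Finset.mem_univ, true_and, not_not] at hT
      exact insert_liftE_subtype G e hT
    · intro A _
      exact subtype_insert_liftE G e A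
    · intro T hT
      simp only [Finset.mem_filter, Finset.mem_univ, true_and, not_not] at hT
      rw [insert_liftE_subtype G e hT]

lemma tutte_subdivide_reindex (G : Multigraph) (e : G.E) (a b : G.V) :
    (G.subdivide e a b).tutte =
      ∑ A : Finset {f : G.E // f ≠ e}, ∑ B : Finset Bool, subTerm G e a b A B := by
  rw [tutte_eq_sum_tutteTerm]
  refine Eq.trans (Fintype.sum_equiv finsetSumEquiv _
    (fun p => subTerm G e a b p.1 p.2) ?_)
    (Fintype.sum_prod_type (f := fun p => subTerm G e a b p.1 p.2))
  intro S
  show tutteTerm (G.subdivide e a b) S = subTerm G e a b S.toLeft S.toRight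
  unfold subTerm
  rw [Finset.toLeft_disjSum_toRight]
  rfl

lemma sum_bool_expand (g : Finset Bool → Polynomial (Polynomial ℤ)) :
    (∑ B : Finset Bool, g B) = g ∅ + g {true} + g {false} + g Finset.univ := by
  rw [show (Finset.univ : Finset (Finset Bool)) = {∅, {true}, {false}, Finset.univ} from by decide]
  rw [Finset.sum_insert (by decide), Finset.sum_insert (by decide), Finset.sum_insert (by decide),
    Finset.sum_singleton]
  ring

lemma tutte_subdivide (G : Multigraph) (e : G.E) (a b : G.V) (hab : G.ends e = s(a, b)) :
    (G.subdivide e a b).tutte = G.tutte +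
      Polynomial.C Polynomial.X *
        ∑ A : Finset {f : G.E // f ≠ e},
          Polynomial.C (Polynomial.X - 1) ^ (G.rank Set.univ - G.rank ↑(liftE G e A)) *
            (Polynomial.X - Polynomial.C 1) ^ (A.card - G.rank ↑(liftE G e A)) := by
  classical
  rw [tutte_subdivide_reindex G e a b, tutte_split G e, Finset.mul_sum,
    ← Finset.sum_add_distrib, ← Finset.sum_add_distrib]
  refine Finset.sum_congr rfl fun A _ => ?_
  rw [sum_bool_expand]
  unfold subTerm tutteTerm
  rw [rank_sub_empty G e a b A, rank_sub_single G e a b true A, rank_sub_single G e a b false A,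
    rank_sub_both G e a b hab A, rank_sub_univ G e a b hab]
  simp only [Finset.card_disjSum, Finset.card_empty, Finset.card_singleton, Finset.card_univ,
    Fintype.card_bool, Nat.add_zero, Finset.card_insert_of_notMem (not_mem_liftE G e A),
    card_liftE]
  have hrA : G.rank ↑(liftE G e A) ≤ G.rank Set.univ := G.rank_le_rank_univ _
  have hCX : (Polynomial.C Polynomial.X : Polynomial (Polynomial ℤ)) =
      Polynomial.C (Polynomial.X - 1) + 1 := by
    rw [map_sub, Polynomial.C_1]
    ring
  rw [show G.rank Set.univ + 1 - G.rank ↑(liftE G e A) =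
      (G.rank Set.univ - G.rank ↑(liftE G e A)) + 1 from by omega,
    show G.rank Set.univ + 1 - (G.rank ↑(liftE G e A) + 1) =
      G.rank Set.univ - G.rank ↑(liftE G e A) from by omega,
    show A.card + 1 - (G.rank ↑(liftE G e A) + 1) = A.card - G.rank ↑(liftE G e A) from by omega,
    show G.rank Set.univ + 1 - (G.rank ↑(insert e (liftE G e A)) + 1) =
      G.rank Set.univ - G.rank ↑(insert e (liftE G e A)) from by omega,
    show A.card + 2 - (G.rank ↑(insert e (liftE G e A)) + 1) =
      A.card + 1 - G.rank ↑(insert e (liftE G e A)) from by omega,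
    hCX, pow_succ]
  ring

lemma D_coeff_zero (G : Multigraph) (e : G.E) (hE : 2 ≤ Fintype.card G.E) :
    (((∑ A : Finset {f : G.E // f ≠ e},
        Polynomial.C (Polynomial.X - 1) ^ (G.rank Set.univ - G.rank ↑(liftE G e A)) *
          (Polynomial.X - Polynomial.C 1) ^ (A.card - G.rank ↑(liftE G e A)) :
        Polynomial (Polynomial ℤ)).coeff 0).coeff 0 : ℤ) = 0 := by
  classical
  rw [Polynomial.finset_sum_coeff, Polynomial.finset_sum_coeff]
  have hterm : ∀ A : Finset {f : G.E // f ≠ e},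
      (((Polynomial.C (Polynomial.X - 1) ^ (G.rank Set.univ - G.rank ↑(liftE G e A)) *
        (Polynomial.X - Polynomial.C 1) ^ (A.card - G.rank ↑(liftE G e A)) :
        Polynomial (Polynomial ℤ)).coeff 0).coeff 0 : ℤ) =
      (-1 : ℤ) ^ (G.rank Set.univ + A.card) := by
    intro A
    have h1 : G.rank ↑(liftE G e A) ≤ G.rank Set.univ := G.rank_le_rank_univ _
    have h2 : G.rank ↑(liftE G e A) ≤ A.card := by
      have := G.rank_coe_le_card (liftE G e A)
      rwa [card_liftE] at this
    have h3 : G.rank Set.univ + A.card =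
        ((G.rank Set.univ - G.rank ↑(liftE G e A)) +
          (A.card - G.rank ↑(liftE G e A))) + 2 * G.rank ↑(liftE G e A) := by omega
    simp only [Polynomial.coeff_zero_eq_eval_zero, Polynomial.eval_mul, Polynomial.eval_pow,
      Polynomial.eval_sub, Polynomial.eval_X, Polynomial.eval_C, Polynomial.eval_one]
    simp only [Polynomial.eval_zero, zero_sub]
    rw [← pow_add, h3, pow_add (-1 : ℤ)
      (G.rank Set.univ - G.rank ↑(liftE G e A) + (A.card - G.rank ↑(liftE G e A)))
      (2 * G.rank ↑(liftE G e A)), pow_mul]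
    norm_num
  rw [Finset.sum_congr rfl (fun A _ => hterm A)]
  have hne : Nonempty {f : G.E // f ≠ e} := by
    obtain ⟨f, hf⟩ := Fintype.exists_ne_of_one_lt_card (by omega) e
    exact ⟨⟨f, hf⟩⟩
  have hzero : (∑ A : Finset {f : G.E // f ≠ e}, (-1 : ℤ) ^ A.card) = 0 := by
    rw [← Finset.powerset_univ]
    exact Finset.sum_powerset_neg_one_pow_card_of_nonempty Finset.univ_nonempty
  calc (∑ A : Finset {f : G.E // f ≠ e}, (-1 : ℤ) ^ (G.rank Set.univ + A.card))
      = ∑ A : Finset {f : G.E // f ≠ e}, (-1 : ℤ) ^ G.rank Set.univ * (-1) ^ A.card := by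
        simp [pow_add]
    _ = (-1 : ℤ) ^ G.rank Set.univ * ∑ A : Finset {f : G.E // f ≠ e}, (-1 : ℤ) ^ A.card := by
        rw [Finset.mul_sum]
    _ = 0 := by rw [hzero, mul_zero]

end Final

/-- The Tutte coefficients `v₀₁` and `v₁₀` are topological invariants: they are
unchanged by subdividing an edge of a graph with at least two edges. -/
theorem tutteCoeff_subdivision_invariant (G : Multigraph)
    (hE : 2 ≤ Fintype.card G.E) (e : G.E) (a b : G.V) (hab : G.ends e = s(a, b)) :
    (G.subdivide e a b).tutteCoeff 0 1 = G.tutteCoeff 0 1 ∧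
    (G.subdivide e a b).tutteCoeff 1 0 = G.tutteCoeff 1 0 := by
  have hid := tutte_subdivide G e a b hab
  have hD := D_coeff_zero G e hE
  constructor
  · unfold tutteCoeff
    rw [hid, Polynomial.coeff_add, Polynomial.coeff_C_mul, Polynomial.coeff_add,
      Polynomial.mul_coeff_zero, Polynomial.coeff_X_zero, zero_mul, add_zero]
  · unfold tutteCoeff
    rw [hid, Polynomial.coeff_add, Polynomial.coeff_C_mul, Polynomial.coeff_add,
      Polynomial.coeff_X_mul, hD, add_zero]

end Multigraph
end

section
/- For every graph G and every positive integer λ, the chromatic polynomial and the Tutte polynomial are related by C(G, λ) = (-1)^{|V(G)| - p0(G)} · λ^{p0(G)} · χ(G; 1-λ, 0). -/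
open scoped Classical

namespace Multigraph

/-- `chromatic G n` is the number of proper colorings of the vertices of `G`
with `n` colors (the endpoints of every edge get different colors). -/
noncomputable def chromatic (G : Multigraph) (n : ℕ) : ℕ :=
  Nat.card {c : G.V → Fin n // ∀ (e : G.E) (v w : G.V), G.ends e = s(v, w) → c v ≠ c w}

/-! ### Auxiliary lemmas about simple graphs -/

open SimpleGraph

section SG

variable {V : Type} {β : Type}

instance aux_finite_cc [Finite V] (H : SimpleGraph V) : Finite H.ConnectedComponent :=
  Quot.finite _

lemma aux_reach_const {H : SimpleGraph V} {c : V → β}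
    (hc : ∀ v w, H.Adj v w → c v = c w) {v w : V} (h : H.Reachable v w) :
    c v = c w := by
  obtain ⟨p⟩ := h
  induction p with
  | nil => rfl
  | cons h p ih => exact (hc _ _ h).trans ih

/-- Colorings constant on adjacent vertices correspond to colorings of components. -/
noncomputable def auxColorEquiv (H : SimpleGraph V) (β : Type) :
    {c : V → β // ∀ v w, H.Adj v w → c v = c w} ≃ (H.ConnectedComponent → β) where
  toFun c := ConnectedComponent.lift c.1 fun v w p _ => aux_reach_const c.2 ⟨p⟩
  invFun f := ⟨fun v => f (H.connectedComponentMk v),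
    fun v w h => congrArg f (ConnectedComponent.connectedComponentMk_eq_of_adj h)⟩
  left_inv c := Subtype.ext rfl
  right_inv f := by
    funext x
    induction x using SimpleGraph.ConnectedComponent.ind
    rfl

/-- The canonical surjection between component sets of comparable graphs. -/
noncomputable def auxCCMap {H H' : SimpleGraph V} (hle : H ≤ H') :
    H.ConnectedComponent → H'.ConnectedComponent :=
  ConnectedComponent.lift (fun v => H'.connectedComponentMk v)
    (fun v w p _ => ConnectedComponent.sound (SimpleGraph.Reachable.mono hle ⟨p⟩))

lemma auxCCMap_mk {H H' : SimpleGraph V} (hle : H ≤ H') (v : V) :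
    auxCCMap hle (H.connectedComponentMk v) = H'.connectedComponentMk v := rfl

lemma aux_card_cc_le_of_le [Finite V] {H H' : SimpleGraph V} (h : H ≤ H') :
    Nat.card H'.ConnectedComponent ≤ Nat.card H.ConnectedComponent := by
  apply Nat.card_le_card_of_surjective (auxCCMap h)
  intro c
  induction c using SimpleGraph.ConnectedComponent.ind with
  | _ v => exact ⟨H.connectedComponentMk v, rfl⟩

lemma aux_card_cc_le_card [Finite V] (H : SimpleGraph V) :
    Nat.card H.ConnectedComponent ≤ Nat.card V :=
  Nat.card_le_card_of_surjective H.connectedComponentMk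
    (fun c => c.ind fun v => ⟨v, rfl⟩)

lemma aux_card_cc_bot [Finite V] :
    Nat.card (⊥ : SimpleGraph V).ConnectedComponent = Nat.card V := by
  refine le_antisymm (aux_card_cc_le_card _) ?_
  apply Nat.card_le_card_of_injective
    (fun v => (⊥ : SimpleGraph V).connectedComponentMk v)
  intro a b h
  exact reachable_bot.mp (ConnectedComponent.exact h)

lemma aux_card_cc_le_succ [Finite V] {H H' : SimpleGraph V} {a b : V}
    (hle : H ≤ H')
    (hcover : ∀ u v, H'.Adj u v → H.Adj u v ∨ s(u, v) = s(a, b)) :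
    Nat.card H.ConnectedComponent ≤ Nat.card H'.ConnectedComponent + 1 := by
  have claim : ∀ u v : V, H'.Reachable u v → H.Reachable u v ∨
      (H.Reachable u a ∧ H.Reachable b v) ∨ (H.Reachable u b ∧ H.Reachable a v) := by
    intro u v h
    obtain ⟨p⟩ := h
    induction p with
    | nil => exact Or.inl (Reachable.refl _)
    | cons hadj p ih =>
      rcases hcover _ _ hadj with h1 | h1
      · have r : H.Reachable _ _ := h1.reachable
        rcases ih with h2 | ⟨h2, h3⟩ | ⟨h2, h3⟩
        · exact Or.inl (r.trans h2)
        · exact Or.inr (Or.inl ⟨r.trans h2, h3⟩)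
        · exact Or.inr (Or.inr ⟨r.trans h2, h3⟩)
      · rcases Sym2.eq_iff.mp h1 with ⟨rfl, rfl⟩ | ⟨rfl, rfl⟩
        · rcases ih with h2 | ⟨h2, h3⟩ | ⟨h2, h3⟩
          · exact Or.inr (Or.inl ⟨Reachable.refl _, h2⟩)
          · exact Or.inl (h2.symm.trans h3)
          · exact Or.inl h3
        · rcases ih with h2 | ⟨h2, h3⟩ | ⟨h2, h3⟩
          · exact Or.inr (Or.inr ⟨Reachable.refl _, h2⟩)
          · exact Or.inl h3
          · exact Or.inl (h2.symm.trans h3)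
  have hinj : Function.Injective (fun x : H.ConnectedComponent =>
      if x = H.connectedComponentMk a then (none : Option H'.ConnectedComponent)
      else some (auxCCMap hle x)) := by
    intro x y hxy
    by_cases h1 : x = H.connectedComponentMk a <;>
      by_cases h2 : y = H.connectedComponentMk a <;>
      simp only [h1, h2, if_pos, if_neg, if_true, if_false, reduceCtorEq,
        Option.some.injEq] at hxy
    · exact h1.trans h2.symm
    · -- hxy : auxCCMap hle x = auxCCMap hle y
      obtain ⟨u, rfl⟩ := x.exists_rep
      obtain ⟨v, rfl⟩ := y.exists_rep
      have hr : H'.Reachable u v := ConnectedComponent.exact hxy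
      rcases claim u v hr with h3 | ⟨h3, h4⟩ | ⟨h3, h4⟩
      · exact ConnectedComponent.sound h3
      · exact absurd (ConnectedComponent.sound h3) h1
      · exact absurd ((ConnectedComponent.sound h4).symm) h2
  haveI := Fintype.ofFinite H'.ConnectedComponent
  haveI : Finite (Option H'.ConnectedComponent) := Finite.of_fintype _
  have := Nat.card_le_card_of_injective _ hinj
  rwa [Finite.card_option] at this

end SG

/-! ### Auxiliary lemmas about multigraphs -/

variable (G : Multigraph)

/-- The simple graph underlying the spanning subgraph with edge set `S`. -/
noncomputable def sg (S : Set G.E) : SimpleGraph G.V := (G.spanning S).toSimpleGraph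

lemma sg_adj (S : Set G.E) (v w : G.V) :
    (G.sg S).Adj v w ↔ v ≠ w ∧ ∃ e ∈ S, G.ends e = s(v, w) := by
  constructor
  · rintro ⟨hne, ⟨e, he⟩, hends⟩
    exact ⟨hne, e, he, hends⟩
  · rintro ⟨hne, e, he, hends⟩
    exact ⟨hne, ⟨e, he⟩, hends⟩

lemma p0_spanning_eq (S : Set G.E) :
    (G.spanning S).p0 = Nat.card (G.sg S).ConnectedComponent := rfl

lemma sg_mono {S T : Set G.E} (h : S ⊆ T) : G.sg S ≤ G.sg T := by
  intro v w hvw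
  rw [sg_adj] at hvw ⊢
  obtain ⟨hne, e, he, hends⟩ := hvw
  exact ⟨hne, e, h he, hends⟩

lemma sg_univ : G.sg Set.univ = G.toSimpleGraph := by
  ext v w
  rw [sg_adj]
  constructor
  · rintro ⟨hne, e, -, hends⟩; exact ⟨hne, e, hends⟩
  · rintro ⟨hne, e, hends⟩; exact ⟨hne, e, Set.mem_univ e, hends⟩

lemma p0_spanning_univ : (G.spanning Set.univ).p0 = G.p0 := by
  rw [p0_spanning_eq, sg_univ]; rfl

lemma p0_le_p0_spanning (S : Set G.E) : G.p0 ≤ (G.spanning S).p0 := by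
  rw [← G.p0_spanning_univ, p0_spanning_eq, p0_spanning_eq]
  exact aux_card_cc_le_of_le (G.sg_mono (Set.subset_univ S))

lemma p0_spanning_le_numV (S : Set G.E) : (G.spanning S).p0 ≤ G.numV := by
  rw [p0_spanning_eq]
  exact (aux_card_cc_le_card (G.sg S)).trans_eq Nat.card_eq_fintype_card

lemma numV_le_card_add_p0 (S : Finset G.E) :
    G.numV ≤ S.card + (G.spanning ↑S).p0 := by
  classical
  induction S using Finset.induction with
  | empty =>
    have hbot : G.sg (↑(∅ : Finset G.E)) = (⊥ : SimpleGraph G.V) := by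
      ext v w
      rw [sg_adj]
      simp
    rw [p0_spanning_eq, hbot, aux_card_cc_bot, Nat.card_eq_fintype_card]
    simp [numV]
  | @insert e S he ih =>
    obtain ⟨a, b, hab⟩ : ∃ a c, G.ends e = s(a, c) := by
      induction G.ends e using Sym2.ind with
      | _ x y => exact ⟨x, y, rfl⟩
    have hle : G.sg ↑S ≤ G.sg ↑(insert e S) := by
      apply G.sg_mono
      intro x hx
      simp only [Finset.coe_insert, Set.mem_insert_iff]
      exact Or.inr hx
    have hcover : ∀ u v, (G.sg ↑(insert e S)).Adj u v →
        (G.sg ↑S).Adj u v ∨ s(u, v) = s(a, b) := by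
      intro u v h
      rw [sg_adj] at h
      obtain ⟨hne, f, hf, hends⟩ := h
      rcases Finset.mem_insert.mp (by exact_mod_cast hf) with rfl | hf'
      · exact Or.inr (hends ▸ hab ▸ rfl)
      · exact Or.inl ((G.sg_adj ↑S u v).mpr ⟨hne, f, hf', hends⟩)
    have hstep : (G.spanning ↑S).p0 ≤ (G.spanning ↑(insert e S)).p0 + 1 := by
      rw [p0_spanning_eq, p0_spanning_eq]
      exact aux_card_cc_le_succ hle hcover
    calc G.numV ≤ S.card + (G.spanning ↑S).p0 := ih
      _ ≤ S.card + ((G.spanning ↑(insert e S)).p0 + 1) := by omega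
      _ = (insert e S).card + (G.spanning ↑(insert e S)).p0 := by
          rw [Finset.card_insert_of_notMem he]; omega

lemma count_mono_colorings (n : ℕ) (S : Set G.E) :
    Nat.card {c : G.V → Fin n // ∀ e ∈ S, ∀ v w, G.ends e = s(v, w) → c v = c w}
      = n ^ (G.spanning S).p0 := by
  have e1 : {c : G.V → Fin n // ∀ e ∈ S, ∀ v w, G.ends e = s(v, w) → c v = c w}
      ≃ {c : G.V → Fin n // ∀ v w, (G.sg S).Adj v w → c v = c w} :=
    Equiv.subtypeEquivRight (by
      intro c
      constructor
      · intro h v w hadj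
        rw [sg_adj] at hadj
        obtain ⟨-, e, he, hends⟩ := hadj
        exact h e he v w hends
      · intro h e he v w hends
        by_cases hvw : v = w
        · rw [hvw]
        · exact h v w ((G.sg_adj S v w).mpr ⟨hvw, e, he, hends⟩))
  rw [Nat.card_congr (e1.trans (auxColorEquiv (G.sg S) (Fin n))), Nat.card_fun,
    Nat.card_eq_fintype_card (α := Fin n), Fintype.card_fin, p0_spanning_eq]

lemma strict_iff_not_mono (n : ℕ) (e : G.E) (c : G.V → Fin n) :
    (∀ v w, G.ends e = s(v, w) → c v ≠ c w) ↔
      ¬(∀ v w, G.ends e = s(v, w) → c v = c w) := by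
  obtain ⟨a, b, hab⟩ : ∃ a d, G.ends e = s(a, d) := by
    induction G.ends e using Sym2.ind with
    | _ x y => exact ⟨x, y, rfl⟩
  have h1 : (∀ v w, G.ends e = s(v, w) → c v = c w) ↔ c a = c b := by
    constructor
    · intro h; exact h a b hab
    · intro h v w hvw
      rw [hab] at hvw
      rcases Sym2.eq_iff.mp hvw with ⟨rfl, rfl⟩ | ⟨rfl, rfl⟩
      · exact h
      · exact h.symm
  have h2 : (∀ v w, G.ends e = s(v, w) → c v ≠ c w) ↔ c a ≠ c b := by
    constructor
    · intro h; exact h a b hab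
    · intro h v w hvw
      rw [hab] at hvw
      rcases Sym2.eq_iff.mp hvw with ⟨rfl, rfl⟩ | ⟨rfl, rfl⟩
      · exact h
      · exact fun hc => h hc.symm
  rw [h1, h2]

/-- Whitney's expansion of the chromatic function. -/
lemma whitney (lam : ℕ) :
    (G.chromatic lam : ℤ) =
      ∑ S : Finset G.E, (-1 : ℤ) ^ S.card * (lam : ℤ) ^ (G.spanning ↑S).p0 := by
  classical
  have hcount : ∀ S : Finset G.E,
      ((lam : ℤ)) ^ (G.spanning ↑S).p0 =
        ((Finset.univ.filter fun c : G.V → Fin lam =>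
          ∀ e ∈ S, ∀ v w, G.ends e = s(v, w) → c v = c w).card : ℤ) := by
    intro S
    have h := G.count_mono_colorings lam ↑S
    rw [Nat.card_eq_fintype_card, Fintype.card_subtype] at h
    have hpred : (Finset.univ.filter fun c : G.V → Fin lam =>
          ∀ e ∈ (↑S : Set G.E), ∀ v w, G.ends e = s(v, w) → c v = c w) =
        (Finset.univ.filter fun c : G.V → Fin lam =>
          ∀ e ∈ S, ∀ v w, G.ends e = s(v, w) → c v = c w) := by
      apply Finset.filter_congr
      intro c _
      simp [Finset.mem_coe]
    rw [hpred] at h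
    exact_mod_cast h.symm
  -- set up bad-edge sets
  set B : (G.V → Fin lam) → Finset G.E := fun c =>
    Finset.univ.filter fun e => ∀ v w, G.ends e = s(v, w) → c v = c w with hB
  calc (G.chromatic lam : ℤ)
      = ((Finset.univ.filter fun c : G.V → Fin lam =>
          ∀ (e : G.E) (v w : G.V), G.ends e = s(v, w) → c v ≠ c w).card : ℤ) := by
        unfold chromatic
        rw [Nat.card_eq_fintype_card, Fintype.card_subtype]
    _ = ((Finset.univ.filter fun c : G.V → Fin lam => B c = ∅).card : ℤ) := by
        congr 1
        refine congrArg Finset.card ?_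
        apply Finset.filter_congr
        intro c _
        rw [Finset.filter_eq_empty_iff]
        constructor
        · intro h e _
          exact (G.strict_iff_not_mono lam e c).mp (h e)
        · intro h e
          exact (G.strict_iff_not_mono lam e c).mpr (h (Finset.mem_univ e))
    _ = ∑ c : G.V → Fin lam, if B c = ∅ then (1 : ℤ) else 0 := by
        rw [Finset.sum_boole]
    _ = ∑ c : G.V → Fin lam, ∑ S ∈ (B c).powerset, (-1 : ℤ) ^ S.card := by
        refine Finset.sum_congr rfl fun c _ => ?_
        rw [Finset.sum_powerset_neg_one_pow_card]
    _ = ∑ c : G.V → Fin lam, ∑ S : Finset G.E,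
          if S ⊆ B c then (-1 : ℤ) ^ S.card else 0 := by
        refine Finset.sum_congr rfl fun c _ => ?_
        rw [show (B c).powerset = Finset.univ.filter (· ⊆ B c) from by
          ext T; simp [Finset.mem_powerset], Finset.sum_filter]
    _ = ∑ S : Finset G.E, ∑ c : G.V → Fin lam,
          if S ⊆ B c then (-1 : ℤ) ^ S.card else 0 := Finset.sum_comm
    _ = ∑ S : Finset G.E, (-1 : ℤ) ^ S.card * (lam : ℤ) ^ (G.spanning ↑S).p0 := by
        refine Finset.sum_congr rfl fun S _ => ?_
        have hfc : (Finset.univ.filter fun c : G.V → Fin lam => S ⊆ B c)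
            = Finset.univ.filter fun c : G.V → Fin lam =>
                ∀ e ∈ S, ∀ v w, G.ends e = s(v, w) → c v = c w := by
          apply Finset.filter_congr
          intro c _
          constructor
          · intro h e he v w hvw
            exact (Finset.mem_filter.mp (h he)).2 v w hvw
          · intro h e he
            exact Finset.mem_filter.mpr ⟨Finset.mem_univ e, h e he⟩
        rw [hcount S, ← Finset.sum_filter, hfc, Finset.sum_const, nsmul_eq_mul]
        ring

lemma tutteEval_apply (x y : ℤ) :
    G.tutteEval x y = ∑ S : Finset G.E,
      (x - 1) ^ (G.rank Set.univ - G.rank ↑S) * (y - 1) ^ (S.card - G.rank ↑S) := by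
  unfold tutteEval tutte
  rw [Polynomial.eval₂_finset_sum]
  refine Finset.sum_congr rfl fun S _ => ?_
  rw [Polynomial.eval₂_mul, Polynomial.eval₂_pow, Polynomial.eval₂_pow,
    Polynomial.eval₂_C, Polynomial.eval₂_sub, Polynomial.eval₂_X, Polynomial.eval₂_C]
  simp [Polynomial.eval₂_sub, Polynomial.eval₂_X, Polynomial.eval₂_one]

lemma neg_one_pow_congr {a b : ℕ} (h : a % 2 = b % 2) : (-1 : ℤ) ^ a = (-1) ^ b := by
  conv_lhs => rw [← Nat.div_add_mod a 2]
  conv_rhs => rw [← Nat.div_add_mod b 2]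
  rw [pow_add, pow_add, pow_mul, pow_mul]
  simp [h]

/-- The chromatic polynomial is determined by the Tutte polynomial:
`C(G, λ) = (-1)^(|V(G)| - p0(G)) λ^(p0(G)) χ(G; 1 - λ, 0)`. -/
theorem chromatic_eq_tutte (G : Multigraph) (lam : ℕ) (hlam : 0 < lam) :
    (G.chromatic lam : ℤ) =
      (-1 : ℤ) ^ (G.numV - G.p0) * (lam : ℤ) ^ G.p0 *
        G.tutteEval (1 - (lam : ℤ)) 0 := by
  classical
  rw [G.whitney lam, G.tutteEval_apply, Finset.mul_sum]
  refine Finset.sum_congr rfl fun S _ => ?_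
  have h1 : G.p0 ≤ (G.spanning ↑S).p0 := G.p0_le_p0_spanning ↑S
  have h2 : (G.spanning ↑S).p0 ≤ G.numV := G.p0_spanning_le_numV ↑S
  have h3 : G.numV ≤ S.card + (G.spanning ↑S).p0 := G.numV_le_card_add_p0 S
  have hru : G.rank Set.univ = G.numV - G.p0 := by
    unfold rank
    rw [G.p0_spanning_univ]
  have hrS : G.rank ↑S = G.numV - (G.spanning ↑S).p0 := rfl
  set p := G.p0 with hp
  set q := (G.spanning ↑S).p0 with hq
  set n := G.numV with hn
  set s := S.card with hs
  rw [hru, hrS]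
  have e1 : n - p - (n - q) = q - p := by omega
  rw [e1]
  have hx : (1 - (lam : ℤ)) - 1 = -(lam : ℤ) := by ring
  have hy : (0 : ℤ) - 1 = -1 := by ring
  rw [hx, hy, neg_pow]
  have hsign : (-1 : ℤ) ^ (n - p) * ((-1) ^ (q - p) * (-1) ^ (s - (n - q)))
      = (-1) ^ s := by
    rw [← pow_add, ← pow_add]
    exact neg_one_pow_congr (by omega)
  have hlam' : (lam : ℤ) ^ p * (lam : ℤ) ^ (q - p) = (lam : ℤ) ^ q := by
    rw [← pow_add]
    congr 1
    omega
  rw [← hsign, ← hlam']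
  ring

end Multigraph
end
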